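/- Let X be a compact metric space and f : X → X continuous with induced map f̄ on K(X). Suppose that for every nonempty open set G ⊆ K(X) × K(X), the set G ∩ C(f̄) (Li–Yorke pairs of f̄ in G) is of second category. Then for every nonempty open set G' ⊆ X × X, the set G' ∩ C(f) is of second category. -/

import Mathlib

/-
By hypothesis, for all nonempty open `U, V ⊆ X` the set `{K ⊆ U} × {L ⊆ V}` contains a non-meagre
set of Li–Yorke pairs of `f̄`. Since `liminf d_H (f̄ⁿ K, f̄ⁿ L) = 0` for such a pair, points of `U`
and `V` come arbitrarily close at arbitrarily late times, so the pairs with `liminf = 0` are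
residual in `X × X`. It remains to see that the pairs with positive `limsup` are not meagre in
`U × V`. If they were, Baire's theorem for the closed sets `{∀ n ≥ N, d (fⁿ x, fⁿ y) ≤ δ}` would
shrink any two nonempty open subsets of `U` and `V` to ones whose points are uniformly eventually
`δ`-close. Doing this simultaneously for the finitely many windows of a Vietoris neighbourhood of
a pair `(K, L)` gives finite sets near `K` and `L` with a whole neighbourhood on which
`d_H (f̄ⁿ ·, f̄ⁿ ·)` is eventually `≤ δ`. So the pairs in `{K ⊆ U} × {L ⊆ V}` with positive `limsup`
under `f̄` would be meagre.
-/

open Filter Metric TopologicalSpace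

/-- The induced map on the hyperspace of nonempty compact subsets. -/
noncomputable def inducedMap {X : Type*} [MetricSpace X] (f : X → X) (hf : Continuous f) :
    NonemptyCompacts X → NonemptyCompacts X :=
  fun K => ⟨⟨f '' K, K.isCompact.image hf⟩, K.nonempty.image f⟩

open Set

section Baire

variable {Z : Type*} [TopologicalSpace Z]

theorem IsClosed.isMeagre_frontier {s : Set Z} (hs : IsClosed s) : IsMeagre (frontier s) :=
  (isClosed_frontier.isNowhereDense_iff.2 (interior_frontier hs)).isMeagre

theorem IsOpen.isMeagre_frontier {s : Set Z} (hs : IsOpen s) : IsMeagre (frontier s) :=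
  frontier_compl s ▸ hs.isClosed_compl.isMeagre_frontier

theorem isMeagre_diff_of_subset_closure {s O : Set Z} (hO : IsOpen O) (hs : s ⊆ closure O) :
    IsMeagre (s \ O) :=
  hO.isMeagre_frontier.mono (hO.frontier_eq ▸ sdiff_subset_sdiff_left hs)

theorem exists_inter_interior_nonempty_of_subset_union [BaireSpace Z] {ι : Type*} [Countable ι]
    {R M : Set Z} {Q : ι → Set Z} (hR : IsOpen R) (hRne : R.Nonempty) (hM : IsMeagre M)
    (hQ : ∀ i, IsClosed (Q i)) (hcov : R ⊆ M ∪ ⋃ i, Q i) : ∃ i, (R ∩ interior (Q i)).Nonempty := by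
  by_contra! hempty
  refine not_isMeagre_of_isOpen hR hRne
    ((hM.union (isMeagre_iUnion fun i => (hQ i).isMeagre_frontier)).mono fun x hxR => ?_)
  refine (hcov hxR).imp_right fun hxQ => ?_
  obtain ⟨i, hxi⟩ := mem_iUnion.1 hxQ
  exact mem_iUnion.2
    ⟨i, subset_closure hxi, fun hint => (eq_empty_iff_forall_notMem.1 (hempty i)) x ⟨hxR, hint⟩⟩

end Baire

theorem Filter.liminf_eq_zero_of_frequently_lt {α : Type*} {l : Filter α} {u : α → ℝ}
    (h0 : ∀ a, 0 ≤ u a) (h : ∀ ε > 0, ∃ᶠ a in l, u a < ε) : liminf u l = 0 := by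
  have hcobdd : IsCoboundedUnder (· ≥ ·) l u :=
    ⟨1, fun _ ha => ((h 1 one_pos).and_eventually ha).exists.elim
      fun _ hx => le_trans hx.2 hx.1.le⟩
  refine le_antisymm (le_of_forall_pos_le_add fun ε hε => ?_)
    (le_liminf_of_le hcobdd (Eventually.of_forall h0))
  rw [zero_add]
  exact liminf_le_of_frequently_le ((h ε hε).mono fun _ => le_of_lt) (isBoundedUnder_of ⟨0, h0⟩)

theorem Filter.isBoundedUnder_le_dist {Y α : Type*} [PseudoMetricSpace Y] [BoundedSpace Y]
    (l : Filter α) (u v : α → Y) : IsBoundedUnder (· ≤ ·) l fun a => dist (u a) (v a) :=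
  isBoundedUnder_of
    ⟨diam (univ : Set Y), fun _ => dist_le_diam_of_mem (Bornology.IsBounded.all _) trivial trivial⟩

namespace TopologicalSpace.NonemptyCompacts

theorem exists_finite_open_forall_range_mem {X : Type*} [TopologicalSpace X]
    {W : Set (NonemptyCompacts X)} (hW : IsOpen W) {K : NonemptyCompacts X} (hK : K ∈ W) :
    ∃ u : Set (Set X), u.Finite ∧ (∀ U ∈ u, IsOpen U ∧ ((K : Set X) ∩ U).Nonempty) ∧
      ∀ c : u → X, (∀ U : u, c U ∈ (U : Set X)) → ∃ K' ∈ W, (K' : Set X) = range c := by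
  obtain ⟨_, ⟨u, ⟨hu, hune, huo⟩, rfl⟩, ⟨-, hKu⟩, hsub⟩ :=
    isTopologicalBasis.exists_subset_of_mem_open hK hW
  refine ⟨u, hu, fun U hU => ⟨huo U hU, hKu U hU⟩, fun c hc => ?_⟩
  have := hu.to_subtype
  have : Nonempty u := hune.to_subtype
  refine ⟨⟨⟨range c, (finite_range c).isCompact⟩, range_nonempty c⟩,
    hsub ⟨?_, fun U hU => ?_⟩, rfl⟩
  · rintro _ ⟨U, rfl⟩
    exact mem_sUnion_of_mem (hc U) U.2
  · exact ⟨c ⟨U, hU⟩, mem_range_self _, hc ⟨U, hU⟩⟩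

variable {X : Type*} [MetricSpace X]

theorem exists_dist_lt_of_dist_lt {K L : NonemptyCompacts X} {r : ℝ} (h : dist K L < r) {x : X}
    (hx : x ∈ K) : ∃ y ∈ L, dist x y < r :=
  exists_dist_lt_of_hausdorffDist_lt hx h <| hausdorffEDist_ne_top_of_nonempty_of_bounded
    K.nonempty L.nonempty K.isCompact.isBounded L.isCompact.isBounded

theorem dist_le_of_forall_dist_le {K L : NonemptyCompacts X} {r : ℝ} (hr : 0 ≤ r)
    (h : ∀ x ∈ K, ∀ y ∈ L, dist x y ≤ r) : dist K L ≤ r :=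
  hausdorffDist_le_of_mem_dist hr (fun x hx => L.nonempty.imp fun y hy => ⟨hy, h x hx y hy⟩)
    fun y hy => K.nonempty.imp fun x hx => ⟨hx, dist_comm y x ▸ h x hx y hy⟩

end TopologicalSpace.NonemptyCompacts

section Dynamics

variable {X : Type*} [MetricSpace X] {f : X → X} {δ : ℝ}

theorem coe_iterate_inducedMap (hf : Continuous f) (n : ℕ) (K : NonemptyCompacts X) :
    ((inducedMap f hf)^[n] K : Set X) = f^[n] '' K := by
  induction n with
  | zero => simp
  | succ n ih =>
    rw [Function.iterate_succ_apply', Function.iterate_succ', image_comp, ← ih]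
    rfl

def liYorkePairs {Y : Type*} [PseudoMetricSpace Y] (g : Y → Y) : Set (Y × Y) :=
  {p | liminf (fun n => dist (g^[n] p.1) (g^[n] p.2)) atTop = 0 ∧
    0 < limsup (fun n => dist (g^[n] p.1) (g^[n] p.2)) atTop}

def EventuallyUniformlyClose (f : X → X) (δ : ℝ) (A B : Set X) : Prop :=
  ∀ᶠ n in atTop, ∀ x ∈ A, ∀ y ∈ B, dist (f^[n] x) (f^[n] y) ≤ δ

namespace EventuallyUniformlyClose

theorem mono {A A' B B' : Set X} (h : EventuallyUniformlyClose f δ A B) (hA : A' ⊆ A)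
    (hB : B' ⊆ B) : EventuallyUniformlyClose f δ A' B' :=
  Eventually.mono h fun _ hn x hx y hy => hn x (hA hx) y (hB hy)

theorem iUnion {ι κ : Type*} [Finite ι] [Finite κ] {A : ι → Set X} {B : κ → Set X}
    (h : ∀ i j, EventuallyUniformlyClose f δ (A i) (B j)) :
    EventuallyUniformlyClose f δ (⋃ i, A i) (⋃ j, B j) := by
  filter_upwards [eventually_all.2 fun i => eventually_all.2 (h i)] with n hn
  simp only [mem_iUnion]
  rintro x ⟨i, hx⟩ y ⟨j, hy⟩
  exact hn i j x hx y hy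

theorem eventually_dist_iterate_inducedMap_le (hf : Continuous f) {K L : NonemptyCompacts X}
    (h : EventuallyUniformlyClose f δ K L) (hδ : 0 ≤ δ) :
    ∀ᶠ n in atTop, dist ((inducedMap f hf)^[n] K) ((inducedMap f hf)^[n] L) ≤ δ := by
  refine Eventually.mono h fun n hn => ?_
  refine NonemptyCompacts.dist_le_of_forall_dist_le hδ ?_
  intro x' hx' y' hy'
  rw [← SetLike.mem_coe, coe_iterate_inducedMap] at hx' hy'
  obtain ⟨x, hx, rfl⟩ := hx'
  obtain ⟨y, hy, rfl⟩ := hy'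
  exact hn x hx y hy

end EventuallyUniformlyClose

theorem exists_pairwise_shrink {Y : Type*} [TopologicalSpace Y] {P : Set Y → Set Y → Prop}
    (hP : ∀ ⦃A A' B B'⦄, P A B → A' ⊆ A → B' ⊆ B → P A' B')
    {ι κ : Type*} [Finite ι] [Finite κ] {S : ι → Set Y} {S' : κ → Set Y}
    (hS : ∀ i, IsOpen (S i) ∧ (S i).Nonempty) (hS' : ∀ j, IsOpen (S' j) ∧ (S' j).Nonempty)
    (h : ∀ i j, ∀ R ⊆ S i, ∀ R' ⊆ S' j, IsOpen R → IsOpen R' → R.Nonempty → R'.Nonempty →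
      ∃ R₁ ⊆ R, ∃ R₁' ⊆ R', IsOpen R₁ ∧ IsOpen R₁' ∧ R₁.Nonempty ∧ R₁'.Nonempty ∧ P R₁ R₁') :
    ∃ (T : ι → Set Y) (T' : κ → Set Y), (∀ i, T i ⊆ S i ∧ IsOpen (T i) ∧ (T i).Nonempty) ∧
      (∀ j, T' j ⊆ S' j ∧ IsOpen (T' j) ∧ (T' j).Nonempty) ∧ ∀ i j, P (T i) (T' j) := by
  classical
  have := Fintype.ofFinite ι
  have := Fintype.ofFinite κ
  suffices ∀ s : Finset (ι × κ), ∃ (T : ι → Set Y) (T' : κ → Set Y),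
      (∀ i, T i ⊆ S i ∧ IsOpen (T i) ∧ (T i).Nonempty) ∧
      (∀ j, T' j ⊆ S' j ∧ IsOpen (T' j) ∧ (T' j).Nonempty) ∧ ∀ p ∈ s, P (T p.1) (T' p.2) by
    obtain ⟨T, T', hT, hT', hPT⟩ := this Finset.univ
    exact ⟨T, T', hT, hT', fun i j => hPT (i, j) (Finset.mem_univ _)⟩
  intro s
  induction s using Finset.induction_on with
  | empty => exact ⟨S, S', fun i => ⟨subset_rfl, hS i⟩, fun j => ⟨subset_rfl, hS' j⟩, by simp⟩
  | insert p s _ ih =>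
    obtain ⟨T, T', hT, hT', hPT⟩ := ih
    obtain ⟨R, hR, R', hR', hRo, hR'o, hRne, hR'ne, hPR⟩ := h p.1 p.2 (T p.1) (hT p.1).1
      (T' p.2) (hT' p.2).1 (hT p.1).2.1 (hT' p.2).2.1 (hT p.1).2.2 (hT' p.2).2.2
    have hsub : ∀ i, Function.update T p.1 R i ⊆ T i :=
      (Function.forall_update_iff T fun i A => A ⊆ T i).2 ⟨hR, fun _ _ => subset_rfl⟩
    have hsub' : ∀ j, Function.update T' p.2 R' j ⊆ T' j :=
      (Function.forall_update_iff T' fun j A => A ⊆ T' j).2 ⟨hR', fun _ _ => subset_rfl⟩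
    refine ⟨Function.update T p.1 R, Function.update T' p.2 R',
      (Function.forall_update_iff T fun i A => A ⊆ S i ∧ IsOpen A ∧ A.Nonempty).2
        ⟨⟨hR.trans (hT _).1, hRo, hRne⟩, fun i _ => hT i⟩,
      (Function.forall_update_iff T' fun j A => A ⊆ S' j ∧ IsOpen A ∧ A.Nonempty).2
        ⟨⟨hR'.trans (hT' _).1, hR'o, hR'ne⟩, fun j _ => hT' j⟩, fun q hq => ?_⟩
    rcases Finset.mem_insert.1 hq with rfl | hq
    · simpa using hPR
    · exact hP (hPT q hq) (hsub _) (hsub' _)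

variable [CompactSpace X]

theorem exists_eventuallyUniformlyClose_of_isMeagre (hf : Continuous f) {R R' : Set X}
    (hR : IsOpen R) (hR' : IsOpen R') (hRne : R.Nonempty) (hR'ne : R'.Nonempty)
    (hM : IsMeagre ((R ×ˢ R') ∩ {p | 0 < limsup (fun n => dist (f^[n] p.1) (f^[n] p.2)) atTop}))
    (hδ : 0 < δ) : ∃ R₁ ⊆ R, ∃ R₁' ⊆ R', IsOpen R₁ ∧ IsOpen R₁' ∧ R₁.Nonempty ∧ R₁'.Nonempty ∧
      EventuallyUniformlyClose f δ R₁ R₁' := by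
  set Q : ℕ → Set (X × X) := fun N => ⋂ n ∈ Ici N, {p | dist (f^[n] p.1) (f^[n] p.2) ≤ δ}
  have hQ : ∀ N, IsClosed (Q N) := fun N => isClosed_biInter fun n _ =>
    isClosed_le ((hf.iterate n).fst'.dist (hf.iterate n).snd') continuous_const
  have hcov : R ×ˢ R' ⊆
      ((R ×ˢ R') ∩ {p | 0 < limsup (fun n => dist (f^[n] p.1) (f^[n] p.2)) atTop}) ∪ ⋃ N, Q N := by
    intro p hp
    rcases lt_or_ge 0 (limsup (fun n => dist (f^[n] p.1) (f^[n] p.2)) atTop) with hpos | hle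
    · exact Or.inl ⟨hp, hpos⟩
    right
    obtain ⟨N, hN⟩ := eventually_atTop.1
      (eventually_lt_of_limsup_lt (hle.trans_lt hδ) (isBoundedUnder_le_dist _ _ _))
    exact mem_iUnion.2 ⟨N, mem_iInter₂.2 fun n hn => (hN n hn).le⟩
  obtain ⟨N, p, hpR, hpQ⟩ :=
    exists_inter_interior_nonempty_of_subset_union (hR.prod hR') (hRne.prod hR'ne) hM hQ hcov
  obtain ⟨R₁, R₁', hR₁, hR₁', hp₁, hp₁', hsub⟩ := isOpen_prod_iff.1 isOpen_interior p.1 p.2 hpQ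
  refine ⟨R₁ ∩ R, inter_subset_right, R₁' ∩ R', inter_subset_right, hR₁.inter hR,
    hR₁'.inter hR', ⟨p.1, hp₁, hpR.1⟩, ⟨p.2, hp₁', hpR.2⟩,
    eventually_atTop.2 ⟨N, fun n hn x hx y hy => ?_⟩⟩
  exact mem_iInter₂.1 (interior_subset (hsub (mk_mem_prod hx.1 hy.1))) n hn

theorem subset_closure_interior_setOf_eventually_dist_le (hf : Continuous f) {U V : Set X}
    (hU : IsOpen U) (hV : IsOpen V)
    (hM : IsMeagre ((U ×ˢ V) ∩ {p | 0 < limsup (fun n => dist (f^[n] p.1) (f^[n] p.2)) atTop}))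
    (hδ : 0 < δ) :
    {K : NonemptyCompacts X | ↑K ⊆ U} ×ˢ {L : NonemptyCompacts X | ↑L ⊆ V} ⊆ closure (interior
      {p | ∀ᶠ n in atTop, dist ((inducedMap f hf)^[n] p.1) ((inducedMap f hf)^[n] p.2) ≤ δ}) := by
  rintro ⟨K, L⟩ ⟨hKU, hLV⟩
  refine mem_closure_iff.2 fun H hH hKLH => ?_
  obtain ⟨W, W', hW, hW', hKW, hLW', hWW'⟩ := isOpen_prod_iff.1 hH K L hKLH
  obtain ⟨u, hu, huK, hcW⟩ := NonemptyCompacts.exists_finite_open_forall_range_mem hW hKW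
  obtain ⟨u', hu', huL, hcW'⟩ := NonemptyCompacts.exists_finite_open_forall_range_mem hW' hLW'
  have := hu.to_subtype
  have := hu'.to_subtype
  obtain ⟨T, T', hT, hT', hclose⟩ := exists_pairwise_shrink (S := fun U' : u => U' ∩ U)
    (S' := fun V' : u' => V' ∩ V) (fun _ _ _ _ => EventuallyUniformlyClose.mono)
    (fun U' => ⟨(huK U' U'.2).1.inter hU,
      let ⟨x, hxK, hxU'⟩ := (huK U' U'.2).2; ⟨x, hxU', hKU hxK⟩⟩)
    (fun V' => ⟨(huL V' V'.2).1.inter hV,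
      let ⟨y, hyL, hyV'⟩ := (huL V' V'.2).2; ⟨y, hyV', hLV hyL⟩⟩)
    fun _ _ R hR R' hR' hRo hR'o hRne hR'ne => exists_eventuallyUniformlyClose_of_isMeagre hf
      hRo hR'o hRne hR'ne (hM.mono (inter_subset_inter_left _
        (prod_mono (hR.trans inter_subset_right) (hR'.trans inter_subset_right)))) hδ
  choose c hc using fun i => (hT i).2.2
  choose c' hc' using fun j => (hT' j).2.2
  obtain ⟨K', hK'W, hK'⟩ := hcW c fun i => ((hT i).1 (hc i)).1
  obtain ⟨L', hL'W', hL'⟩ := hcW' c' fun j => ((hT' j).1 (hc' j)).1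
  refine ⟨(K', L'), hWW' ⟨hK'W, hL'W'⟩, mem_interior.2
    ⟨{K : NonemptyCompacts X | ↑K ⊆ ⋃ i, T i} ×ˢ
      {L : NonemptyCompacts X | ↑L ⊆ ⋃ j, T' j}, fun p hp => ?_,
      (NonemptyCompacts.isOpen_subsets_of_isOpen (isOpen_iUnion fun i => (hT i).2.1)).prod
        (NonemptyCompacts.isOpen_subsets_of_isOpen (isOpen_iUnion fun j => (hT' j).2.1)),
      ?_, ?_⟩⟩
  · exact ((EventuallyUniformlyClose.iUnion hclose).mono hp.1 hp.2
      ).eventually_dist_iterate_inducedMap_le hf hδ.le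
  · show (K' : Set X) ⊆ _
    exact hK' ▸ range_subset_iff.2 fun i => mem_iUnion.2 ⟨i, hc i⟩
  · show (L' : Set X) ⊆ _
    exact hL' ▸ range_subset_iff.2 fun j => mem_iUnion.2 ⟨j, hc' j⟩

theorem isMeagre_inter_liYorkePairs_inducedMap (hf : Continuous f) {U V : Set X}
    (hU : IsOpen U) (hV : IsOpen V)
    (hM : IsMeagre ((U ×ˢ V) ∩ {p | 0 < limsup (fun n => dist (f^[n] p.1) (f^[n] p.2)) atTop})) :
    IsMeagre (({K : NonemptyCompacts X | ↑K ⊆ U} ×ˢ {L : NonemptyCompacts X | ↑L ⊆ V}) ∩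
      liYorkePairs (inducedMap f hf)) := by
  refine (isMeagre_iUnion fun k : ℕ => isMeagre_diff_of_subset_closure isOpen_interior
    (subset_closure_interior_setOf_eventually_dist_le hf hU hV hM
      (Nat.one_div_pos_of_nat (n := k)))).mono ?_
  rintro p ⟨hpG, -, hpos⟩
  obtain ⟨k, hk⟩ := exists_nat_one_div_lt hpos
  refine mem_iUnion.2 ⟨k, hpG, fun hpO => hk.not_ge ?_⟩
  have hev := interior_subset hpO
  exact limsup_le_of_le (isCoboundedUnder_le_of_le atTop fun _ => dist_nonneg) hev

theorem dense_iUnion_setOf_dist_iterate_lt (hf : Continuous f)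
    (h : ∀ U V : Set X, IsOpen U → IsOpen V → U.Nonempty → V.Nonempty →
      ∃ K L : NonemptyCompacts X, ↑K ⊆ U ∧ ↑L ⊆ V ∧
        liminf (fun n => dist ((inducedMap f hf)^[n] K) ((inducedMap f hf)^[n] L)) atTop = 0)
    {ε : ℝ} (hε : 0 < ε) (N : ℕ) :
    Dense (⋃ n ∈ Ici N, {p : X × X | dist (f^[n] p.1) (f^[n] p.2) < ε}) := by
  refine dense_iff_inter_open.2 fun H hH ⟨q, hq⟩ => ?_
  obtain ⟨U, V, hU, hV, hqU, hqV, hUV⟩ := isOpen_prod_iff.1 hH q.1 q.2 hq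
  obtain ⟨K, L, hKU, hLV, hliminf⟩ := h U V hU hV ⟨_, hqU⟩ ⟨_, hqV⟩
  obtain ⟨n, hnN, hn⟩ := frequently_atTop.1 (frequently_lt_of_liminf_lt
    (isBoundedUnder_le_dist _ _ _).isCoboundedUnder_ge (hliminf.trans_lt hε)) N
  obtain ⟨a, ha⟩ := K.nonempty
  obtain ⟨y, hy, hay⟩ := NonemptyCompacts.exists_dist_lt_of_dist_lt hn
    (x := f^[n] a) (by rw [← SetLike.mem_coe, coe_iterate_inducedMap]; exact mem_image_of_mem _ ha)
  rw [← SetLike.mem_coe, coe_iterate_inducedMap] at hy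
  obtain ⟨b, hb, rfl⟩ := hy
  exact ⟨(a, b), hUV ⟨hKU ha, hLV hb⟩, mem_iUnion₂.2 ⟨n, hnN, hay⟩⟩

theorem isMeagre_setOf_liminf_dist_iterate_ne_zero (hf : Continuous f)
    (h : ∀ U V : Set X, IsOpen U → IsOpen V → U.Nonempty → V.Nonempty →
      ∃ K L : NonemptyCompacts X, ↑K ⊆ U ∧ ↑L ⊆ V ∧
        liminf (fun n => dist ((inducedMap f hf)^[n] K) ((inducedMap f hf)^[n] L)) atTop = 0) :
    IsMeagre {p : X × X | liminf (fun n => dist (f^[n] p.1) (f^[n] p.2)) atTop ≠ 0} := by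
  have hopen : ∀ (ε : ℝ) (N : ℕ),
      IsOpen (⋃ n ∈ Ici N, {p : X × X | dist (f^[n] p.1) (f^[n] p.2) < ε}) :=
    fun ε N => isOpen_biUnion fun n _ =>
      isOpen_lt ((hf.iterate n).fst'.dist (hf.iterate n).snd') continuous_const
  show _ ∈ residual _
  filter_upwards [eventually_countable_forall.2 fun k : ℕ => eventually_countable_forall.2
    fun N => residual_of_dense_open (hopen _ N)
      (dense_iUnion_setOf_dist_iterate_lt hf h Nat.one_div_pos_of_nat N)] with p hp
  refine not_not.2 (liminf_eq_zero_of_frequently_lt (fun _ => dist_nonneg) fun ε hε => ?_)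
  obtain ⟨k, hk⟩ := exists_nat_one_div_lt hε
  refine frequently_atTop.2 fun N => ?_
  obtain ⟨n, hn, hlt⟩ := mem_iUnion₂.1 (hp k N)
  exact ⟨n, hn, hlt.trans hk⟩

end Dynamics

/-- If for every nonempty open set `G ⊆ K(X) × K(X)` the set of Li–Yorke pairs of `f̄` in `G`
is of second category (i.e. not meagre), then for every nonempty open set `G' ⊆ X × X` the set
of Li–Yorke pairs of `f` in `G'` is of second category. -/
theorem secondCategory_LiYorke_of_induced
    {X : Type*} [MetricSpace X] [CompactSpace X] (f : X → X) (hf : Continuous f)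
    (h : ∀ G : Set (NonemptyCompacts X × NonemptyCompacts X), IsOpen G → G.Nonempty →
      ¬ IsMeagre (G ∩ {p : NonemptyCompacts X × NonemptyCompacts X |
        liminf (fun n => dist ((inducedMap f hf)^[n] p.1) ((inducedMap f hf)^[n] p.2)) atTop = 0 ∧
        0 < limsup (fun n => dist ((inducedMap f hf)^[n] p.1) ((inducedMap f hf)^[n] p.2)) atTop})) :
    ∀ G' : Set (X × X), IsOpen G' → G'.Nonempty →
      ¬ IsMeagre (G' ∩ {p : X × X |
        liminf (fun n => dist (f^[n] p.1) (f^[n] p.2)) atTop = 0 ∧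
        0 < limsup (fun n => dist (f^[n] p.1) (f^[n] p.2)) atTop}) := by
  have hG : ∀ U V : Set X, IsOpen U → IsOpen V → U.Nonempty → V.Nonempty →
      ¬ IsMeagre (({K : NonemptyCompacts X | ↑K ⊆ U} ×ˢ {L : NonemptyCompacts X | ↑L ⊆ V}) ∩
        liYorkePairs (inducedMap f hf)) := fun U V hU hV ⟨x, hx⟩ ⟨y, hy⟩ =>
    h _ ((NonemptyCompacts.isOpen_subsets_of_isOpen hU).prod
      (NonemptyCompacts.isOpen_subsets_of_isOpen hV))
      ⟨({x}, {y}), by simpa using hx, by simpa using hy⟩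
  have hproximal := isMeagre_setOf_liminf_dist_iterate_ne_zero hf fun U V hU hV hUne hVne =>
    let ⟨⟨K, L⟩, ⟨hKU, hLV⟩, hliminf, _⟩ := nonempty_of_not_isMeagre (hG U V hU hV hUne hVne)
    ⟨K, L, hKU, hLV, hliminf⟩
  rintro G' hG' ⟨p, hp⟩ hmeagre
  obtain ⟨r, hr, hball⟩ := Metric.isOpen_iff.1 hG' p hp
  refine hG (ball p.1 r) (ball p.2 r) isOpen_ball isOpen_ball
    ⟨_, mem_ball_self hr⟩ ⟨_, mem_ball_self hr⟩
    (isMeagre_inter_liYorkePairs_inducedMap hf isOpen_ball isOpen_ball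
      ((hmeagre.union hproximal).mono fun q hq => ?_))
  obtain ⟨hq, hpos⟩ := hq
  by_cases hq0 : liminf (fun n => dist (f^[n] q.1) (f^[n] q.2)) atTop = 0
  · exact Or.inl ⟨hball (by rwa [← ball_prod_same]), hq0, hpos⟩
  · exact Or.inr hq0
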